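/- For any two density operators ρ_A, ρ_B on ℂ^d, the maximum over all couplings ρ_{AB} of Tr(P_s ρ_{AB}) is at most (1 + F(ρ_A, ρ_B))/2. -/

import Mathlib

open scoped Matrix Kronecker ComplexOrder

noncomputable section

namespace QEMD

variable {m n : Type*} [Fintype m] [Fintype n] [DecidableEq m] [DecidableEq n]

/-- Total square root: the PSD square root if `A` is PSD, else `0`. -/
def msqrt (A : Matrix n n ℂ) : Matrix n n ℂ :=
  letI := Classical.dec A.PosSemidef
  if h : A.PosSemidef then
    (h.1.eigenvectorUnitary : Matrix n n ℂ) *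
      Matrix.diagonal (fun i => ((Real.sqrt (h.1.eigenvalues i) : ℝ) : ℂ)) *
      star (h.1.eigenvectorUnitary : Matrix n n ℂ)
  else 0

/-- Trace norm `‖A‖₁ = Tr √(AᴴA)`. -/
def traceNorm (A : Matrix n n ℂ) : ℝ :=
  ((msqrt (Aᴴ * A)).trace).re

/-- Trace distance `D(ρ,σ) = ½‖ρ-σ‖₁`. -/
def traceDist (ρ σ : Matrix n n ℂ) : ℝ := traceNorm (ρ - σ) / 2

/-- Fidelity `F(ρ,σ) = Tr √(√ρ σ √ρ)`. -/
def fidelity (ρ σ : Matrix n n ℂ) : ℝ :=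
  ((msqrt (msqrt ρ * σ * msqrt ρ)).trace).re

/-- Density matrix predicate. -/
def IsDensity (ρ : Matrix n n ℂ) : Prop := ρ.PosSemidef ∧ ρ.trace = 1

/-- Projector `|v⟩⟨v|` onto a vector. -/
def proj (v : n → ℂ) : Matrix n n ℂ := Matrix.of fun i j => v i * star (v j)

/-- Partial trace over the first (left) factor. -/
def traceLeft (ρ : Matrix (m × n) (m × n) ℂ) : Matrix n n ℂ :=
  Matrix.of fun i j => ∑ k, ρ (k, i) (k, j)

/-- Partial trace over the second (right) factor. -/
def traceRight (ρ : Matrix (m × n) (m × n) ℂ) : Matrix m m ℂ :=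
  Matrix.of fun i j => ∑ k, ρ (i, k) (j, k)

/-- The swap operator `S|αβ⟩ = |βα⟩` on `ℂ^d ⊗ ℂ^d`. -/
def swap (d : ℕ) : Matrix (Fin d × Fin d) (Fin d × Fin d) ℂ :=
  Matrix.of fun p q => if p.1 = q.2 ∧ p.2 = q.1 then 1 else 0

/-- Projection onto the symmetric subspace, `P_s = (I + S)/2`. -/
def Psym (d : ℕ) : Matrix (Fin d × Fin d) (Fin d × Fin d) ℂ := (2:ℂ)⁻¹ • (1 + swap d)

/-- Projection onto the antisymmetric subspace, `P_as = (I - S)/2`. -/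
def Pasym (d : ℕ) : Matrix (Fin d × Fin d) (Fin d × Fin d) ℂ := (2:ℂ)⁻¹ • (1 - swap d)

/-- `ρAB` is a quantum coupling of `ρA` and `ρB`. -/
def IsCoupling (ρAB : Matrix (m × n) (m × n) ℂ) (ρA : Matrix m m ℂ)
    (ρB : Matrix n n ℂ) : Prop :=
  IsDensity ρAB ∧ traceRight ρAB = ρA ∧ traceLeft ρAB = ρB

/-- The maximally entangled vector `|Φ⟩ = (1/√d) ∑ᵢ |i⟩|i⟩`. -/
def maxEnt (d : ℕ) : Fin d × Fin d → ℂ :=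
  fun p => if p.1 = p.2 then ((1 / Real.sqrt d : ℝ) : ℂ) else 0

/-!
Since `Tr(P_s ρ) = (Tr ρ + Tr(S ρ))/2`, it suffices to show `Re Tr(S ρ_AB) ≤ F(ρ_A, ρ_B)`.
Factoring `ρ_AB = T Tᴴ` and regrouping the entries of `T` gives matrices `V`, `W` with
`V Vᴴ = ρ_A`, `Wᴴ W = ρ_B` and `Tr(V W) = Tr(S ρ_AB)`, so the block matrix
`[[ρ_A, V W], [(V W)ᴴ, ρ_B]]` is positive semidefinite.

For a positive semidefinite block matrix `[[ρ, C], [Cᴴ, σ]]` and any `X > 0`, pairing it with the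
positive matrix `[[X, -1], [-1, X⁻¹]]` gives `2 Re Tr C ≤ Tr(ρ X) + Tr(σ X⁻¹)`. With `s = √ρ` and
`G = √(s σ s)`, the choice `X = s⁻¹ G s⁻¹` makes both terms equal to `Tr G = F(ρ, σ)`. As `s` and
`G` may be singular, we take `X = R⁻¹ (G + t) R⁻¹` with `R = s + t²` instead, whose error terms
are `O(t)`, and let `t → 0`.
-/

end QEMD

namespace QEMD

open Matrix

variable {m n k : Type*} [Fintype k]

def leftFactor (T : Matrix (m × n) k ℂ) : Matrix m (n × k) ℂ :=
  of fun i p => T (i, p.1) p.2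

def rightFactor (T : Matrix (m × n) k ℂ) : Matrix (m × k) n ℂ :=
  of fun p j => star (T (p.1, j) p.2)

lemma leftFactor_mul_conjTranspose [Fintype n] (T : Matrix (m × n) k ℂ) :
    leftFactor T * (leftFactor T)ᴴ = traceRight (T * Tᴴ) := by
  ext i i'
  simp [leftFactor, traceRight, mul_apply, Fintype.sum_prod_type]

lemma conjTranspose_rightFactor_mul [Fintype m] (T : Matrix (m × n) k ℂ) :
    (rightFactor T)ᴴ * rightFactor T = traceLeft (T * Tᴴ) := by
  ext j j'
  simp [rightFactor, traceLeft, mul_apply, Fintype.sum_prod_type]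

lemma trace_leftFactor_mul_rightFactor [Fintype n] (T : Matrix (n × n) k ℂ) :
    (leftFactor T * rightFactor T).trace = ∑ i, ∑ j, (T * Tᴴ) (i, j) (j, i) := by
  simp [leftFactor, rightFactor, trace, mul_apply, Fintype.sum_prod_type]

variable [Fintype m] [Fintype n]

lemma posSemidef_mul_mul_of_isHermitian {A M : Matrix n n ℂ} (hA : A.PosSemidef)
    (hM : M.IsHermitian) : (M * A * M).PosSemidef := by
  simpa only [hM.eq] using hA.mul_mul_conjTranspose_same M

lemma trace_fromBlocks {α : Type*} [AddCommMonoid α] (A : Matrix m m α) (B : Matrix m n α)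
    (C : Matrix n m α) (D : Matrix n n α) : (fromBlocks A B C D).trace = A.trace + D.trace := by
  simp [trace, Fintype.sum_sum_type]

lemma posSemidef_fromBlocks_mul (V : Matrix m k ℂ) (W : Matrix k n ℂ) :
    (fromBlocks (V * Vᴴ) (V * W) (V * W)ᴴ (Wᴴ * W)).PosSemidef := by
  simpa [conjTranspose_fromCols_eq_fromRows_conjTranspose, fromRows_mul_fromCols] using
    posSemidef_conjTranspose_mul_self (fromCols Vᴴ W)

lemma trace_swap_mul {d : ℕ} (ρ : Matrix (Fin d × Fin d) (Fin d × Fin d) ℂ) :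
    (swap d * ρ).trace = ∑ i, ∑ j, ρ (i, j) (j, i) := by
  rw [Finset.sum_comm]
  simp [swap, trace, mul_apply, Fintype.sum_prod_type, ite_and]

lemma trace_Psym_mul {d : ℕ} (ρ : Matrix (Fin d × Fin d) (Fin d × Fin d) ℂ) :
    (Psym d * ρ).trace = (ρ.trace + (swap d * ρ).trace) / 2 := by
  simp only [Psym, smul_add, Matrix.add_mul, Algebra.smul_mul_assoc, one_mul, trace_add,
    trace_smul, smul_eq_mul]
  ring

section Sqrt

variable [DecidableEq n]

lemma posSemidef_msqrt {A : Matrix n n ℂ} (hA : A.PosSemidef) : (msqrt A).PosSemidef := by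
  rw [msqrt, dif_pos hA]
  exact (PosSemidef.diagonal fun i => Complex.zero_le_real.mpr (Real.sqrt_nonneg _))
    |>.mul_mul_conjTranspose_same _

lemma msqrt_mul_msqrt {A : Matrix n n ℂ} (hA : A.PosSemidef) : msqrt A * msqrt A = A := by
  rw [msqrt, dif_pos hA]
  set U := (hA.1.eigenvectorUnitary : Matrix n n ℂ)
  set D := diagonal fun i => ((Real.sqrt (hA.1.eigenvalues i) : ℝ) : ℂ)
  have hUU : star U * U = 1 := Unitary.star_mul_self_of_mem hA.1.eigenvectorUnitary.2
  have hDD : D * D = diagonal (RCLike.ofReal ∘ hA.1.eigenvalues) := by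
    rw [diagonal_mul_diagonal]
    congr 1
    funext i
    rw [← Complex.ofReal_mul, Real.mul_self_sqrt (hA.eigenvalues_nonneg i)]
    rfl
  calc U * D * star U * (U * D * star U) = U * (D * D) * star U := by
        simp only [Matrix.mul_assoc]
        rw [← Matrix.mul_assoc (star U) U, hUU, Matrix.one_mul]
    _ = A := by
        rw [hDD]
        conv_rhs => rw [hA.1.spectral_theorem]
        simp [Unitary.conjStarAlgAut_apply, U]

lemma re_trace_mul_nonneg {P Q : Matrix n n ℂ} (hP : P.PosSemidef) (hQ : Q.PosSemidef) :
    0 ≤ ((P * Q).trace).re := by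
  have hs := posSemidef_msqrt hP
  rw [← msqrt_mul_msqrt hP, Matrix.mul_assoc, trace_mul_comm]
  exact (Complex.nonneg_iff.mp (posSemidef_mul_mul_of_isHermitian hQ hs.isHermitian).trace_nonneg).1

lemma re_trace_mul_le_of_posSemidef_sub {A B Q : Matrix n n ℂ} (hAB : (B - A).PosSemidef)
    (hQ : Q.PosSemidef) : ((A * Q).trace).re ≤ ((B * Q).trace).re := by
  have := re_trace_mul_nonneg hAB hQ
  rw [Matrix.sub_mul, trace_sub, Complex.sub_re] at this
  linarith

lemma two_mul_re_trace_le_of_fromBlocks {ρ σ C X : Matrix n n ℂ}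
    (hP : (fromBlocks ρ C Cᴴ σ).PosSemidef) (hX : X.PosDef) :
    2 * (C.trace).re ≤ ((ρ * X).trace).re + ((σ * X⁻¹).trace).re := by
  have := hX.isUnit.invertible
  have hQ : (fromBlocks X (-1) (-1) X⁻¹).PosSemidef := by
    simpa using (PosDef.fromBlocks₁₁ (-1 : Matrix n n ℂ) X⁻¹ hX).mpr (by simpa using .zero)
  have h := re_trace_mul_nonneg hP hQ
  simp only [fromBlocks_multiply, mul_neg, mul_one, trace_fromBlocks, trace_add, trace_neg,
    trace_conjTranspose, RCLike.star_def, Complex.add_re, Complex.neg_re, Complex.conj_re] at h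
  linarith

lemma posSemidef_inv_smul_one_sub_inv_add_smul_one {G : Matrix n n ℂ} (hG : G.PosSemidef)
    {b : ℝ} (hb : 0 < b) : (b⁻¹ • (1 : Matrix n n ℂ) - (G + b • 1)⁻¹).PosSemidef := by
  set K := G + b • (1 : Matrix n n ℂ)
  have hK : K.PosDef := PosDef.posSemidef_add hG (PosDef.one.smul hb)
  have := hK.isUnit.invertible
  have hGK : (G * K).PosSemidef := by
    rw [Matrix.mul_add, Matrix.mul_smul, Matrix.mul_one]
    exact (hG.isHermitian.eq ▸ posSemidef_conjTranspose_mul_self G).add (hG.smul hb.le)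
  -- `b⁻¹ - K⁻¹ = b⁻¹ K⁻¹ G = b⁻¹ K⁻¹ (G K) K⁻¹`
  have h : b⁻¹ • (1 : Matrix n n ℂ) - K⁻¹ = b⁻¹ • (K⁻¹ * (G * K) * K⁻¹) := by
    have hG' : G = K - b • 1 := by simp [K]
    rw [Matrix.mul_assoc, Matrix.mul_assoc, mul_inv_of_invertible, Matrix.mul_one, hG',
      Matrix.mul_sub, inv_mul_of_invertible, Matrix.mul_smul, Matrix.mul_one, smul_sub, smul_smul,
      inv_mul_cancel₀ hb.ne', one_smul]
  rw [h]
  exact (posSemidef_mul_mul_of_isHermitian hGK hK.inv.isHermitian).smul (inv_nonneg.mpr hb.le)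

lemma re_trace_mul_inv_add_smul_one_le {G σ : Matrix n n ℂ} (hG : G.PosSemidef)
    (hσ : σ.PosSemidef) {b : ℝ} (hb : 0 < b) :
    ((σ * (G + b • 1)⁻¹).trace).re ≤ (σ.trace).re / b := by
  have h := re_trace_mul_le_of_posSemidef_sub
    (posSemidef_inv_smul_one_sub_inv_add_smul_one hG hb) hσ
  rw [trace_mul_comm]
  simpa only [Matrix.smul_mul, Matrix.one_mul, trace_smul, Complex.smul_re, smul_eq_mul,
    div_eq_inv_mul] using h

lemma re_trace_mul_self_mul_inv_add_smul_one_le {G : Matrix n n ℂ} (hG : G.PosSemidef)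
    {b : ℝ} (hb : 0 < b) : ((G * G * (G + b • 1)⁻¹).trace).re ≤ (G.trace).re := by
  set K := G + b • (1 : Matrix n n ℂ)
  have hK : K.PosDef := PosDef.posSemidef_add hG (PosDef.one.smul hb)
  have := hK.isUnit.invertible
  have h : G - G * G * K⁻¹ = b • (G * K⁻¹) := by
    calc G - G * G * K⁻¹ = (G * K - G * G) * K⁻¹ := by
          rw [Matrix.sub_mul, Matrix.mul_assoc G K, mul_inv_of_invertible, Matrix.mul_one]
      _ = b • (G * K⁻¹) := by
          rw [show G * K - G * G = b • G by simp [K, Matrix.mul_add], Matrix.smul_mul]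
  have := re_trace_mul_nonneg hG hK.inv.posSemidef
  have h' := congrArg (fun M => (trace M).re) h
  simp only [trace_sub, Complex.sub_re, trace_smul, Complex.smul_re, smul_eq_mul] at h'
  linarith [mul_nonneg hb.le this]

lemma posSemidef_sub_conj_add_sq_smul_one {s σ : Matrix n n ℂ} (hs : s.IsHermitian)
    (hσ : σ.PosSemidef) {t : ℝ} (ht : 0 ≤ t) :
    ((1 + t) • (s * σ * s) + (t ^ 3 * (1 + t)) • σ
      - (s + t ^ 2 • 1) * σ * (s + t ^ 2 • 1)).PosSemidef := by
  have hst : (s - t • 1).IsHermitian := hs.sub (isHermitian_one.smul (IsSelfAdjoint.all t))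
  have h : (1 + t) • (s * σ * s) + (t ^ 3 * (1 + t)) • σ - (s + t ^ 2 • 1) * σ * (s + t ^ 2 • 1)
      = t • ((s - t • 1) * σ * (s - t • 1)) := by
    simp only [Matrix.add_mul, Matrix.mul_add, Matrix.sub_mul, Matrix.mul_sub, Matrix.smul_mul,
      Matrix.mul_smul, Matrix.one_mul, Matrix.mul_one, smul_smul, smul_add, smul_sub]
    module
  rw [h]
  exact (posSemidef_mul_mul_of_isHermitian hσ hst).smul ht

lemma two_mul_re_trace_le_of_fromBlocks_of_sqrt {ρ σ C s G : Matrix n n ℂ}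
    (hP : (fromBlocks ρ C Cᴴ σ).PosSemidef) (hs : s.PosSemidef) (hss : s * s = ρ)
    (hG : G.PosSemidef) (hGG : G * G = s * σ * s) {t : ℝ} (ht : 0 < t) :
    2 * (C.trace).re ≤ (2 + t) * (G.trace).re
      + t * (Fintype.card n + t * (1 + t) * (σ.trace).re) := by
  have hσ : σ.PosSemidef := hP.submatrix Sum.inr
  set R := s + t ^ 2 • (1 : Matrix n n ℂ)
  set K := G + t • (1 : Matrix n n ℂ)
  have hR : R.PosDef := PosDef.posSemidef_add hs (PosDef.one.smul (by positivity))
  have hK : K.PosDef := PosDef.posSemidef_add hG (PosDef.one.smul ht)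
  have := hR.isUnit.invertible
  set X := R⁻¹ * K * R⁻¹
  have hX : X.PosDef := by
    simpa only [hR.inv.isHermitian.eq] using hK.conjTranspose_mul_mul_same
      (mulVec_injective_iff_isUnit.mpr (isUnit_nonsing_inv_iff.mpr hR.isUnit))
  have hXinv : X⁻¹ = R * K⁻¹ * R := by
    simp only [X, Matrix.mul_inv_rev, inv_inv_of_invertible, Matrix.mul_assoc]
  have hρX : ((ρ * X).trace).re ≤ (G.trace).re + t * Fintype.card n := by
    have hρR : (R * R - ρ).PosSemidef := by
      have h : R * R - ρ = (2 * t ^ 2) • s + (t ^ 2 * t ^ 2) • 1 := by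
        simp only [R, ← hss, Matrix.add_mul, Matrix.mul_add, Matrix.smul_mul, Matrix.mul_smul,
          Matrix.one_mul, Matrix.mul_one]
        module
      rw [h]
      exact (hs.smul (by positivity)).add (PosSemidef.one.smul (by positivity))
    have hRRX : (R * R * X).trace = K.trace := by
      rw [show R * R * X = R * (K * R⁻¹) by
        simp only [X, ← Matrix.mul_assoc, mul_inv_cancel_right_of_invertible], trace_mul_comm,
        Matrix.mul_assoc, inv_mul_of_invertible, Matrix.mul_one]
    calc ((ρ * X).trace).re ≤ ((R * R * X).trace).re :=
          re_trace_mul_le_of_posSemidef_sub hρR hX.posSemidef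
      _ = (G.trace).re + t * Fintype.card n := by simp [hRRX, K]
  have hσX : ((σ * X⁻¹).trace).re ≤ (1 + t) * (G.trace).re + t ^ 2 * (1 + t) * (σ.trace).re := by
    have hRσR : ((1 + t) • (G * G) + (t ^ 3 * (1 + t)) • σ - R * σ * R).PosSemidef :=
      hGG ▸ posSemidef_sub_conj_add_sq_smul_one hs.isHermitian hσ ht.le
    have hσK := re_trace_mul_inv_add_smul_one_le hG hσ ht
    have hGGK := re_trace_mul_self_mul_inv_add_smul_one_le hG ht
    calc ((σ * X⁻¹).trace).re = ((R * σ * R * K⁻¹).trace).re := by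
          rw [hXinv, ← Matrix.mul_assoc, trace_mul_comm, Matrix.mul_assoc, Matrix.mul_assoc]
      _ ≤ (((1 + t) • (G * G) + (t ^ 3 * (1 + t)) • σ) * K⁻¹).trace.re :=
          re_trace_mul_le_of_posSemidef_sub hRσR hK.inv.posSemidef
      _ = (1 + t) * ((G * G * K⁻¹).trace).re + t ^ 3 * (1 + t) * ((σ * K⁻¹).trace).re := by
          simp only [Matrix.add_mul, Matrix.smul_mul, trace_add, trace_smul, Complex.add_re,
            Complex.smul_re, smul_eq_mul]
      _ ≤ (1 + t) * (G.trace).re + t ^ 3 * (1 + t) * ((σ.trace).re / t) := by gcongr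
      _ = (1 + t) * (G.trace).re + t ^ 2 * (1 + t) * (σ.trace).re := by field_simp
  have := two_mul_re_trace_le_of_fromBlocks hP hX
  linarith

theorem re_trace_le_fidelity_of_fromBlocks {ρ σ C : Matrix n n ℂ}
    (hP : (fromBlocks ρ C Cᴴ σ).PosSemidef) : (C.trace).re ≤ fidelity ρ σ := by
  have hρ : ρ.PosSemidef := hP.submatrix Sum.inl
  have hs := posSemidef_msqrt hρ
  have hsσs := posSemidef_mul_mul_of_isHermitian (hP.submatrix Sum.inr) hs.isHermitian
  set F := fidelity ρ σ
  set c := (Fintype.card n : ℝ)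
  set τ := (σ.trace).re
  have hbound : ∀ t > 0, 2 * (C.trace).re ≤ (2 + t) * F + t * (c + t * (1 + t) * τ) :=
    fun t ht => two_mul_re_trace_le_of_fromBlocks_of_sqrt hP hs (msqrt_mul_msqrt hρ)
      (posSemidef_msqrt hsσs) (msqrt_mul_msqrt hsσs) ht
  have hcont : Continuous fun t : ℝ => (2 + t) * F + t * (c + t * (1 + t) * τ) := by fun_prop
  have hlim := tendsto_nhdsWithin_of_tendsto_nhds (s := Set.Ioi 0) (hcont.tendsto 0)
  simp only [add_zero, zero_mul] at hlim
  linarith [ge_of_tendsto hlim (eventually_nhdsWithin_of_forall hbound)]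

end Sqrt

lemma re_trace_swap_mul_le_fidelity {d : ℕ} {ρ : Matrix (Fin d × Fin d) (Fin d × Fin d) ℂ}
    (hρ : ρ.PosSemidef) : ((swap d * ρ).trace).re ≤ fidelity (traceRight ρ) (traceLeft ρ) := by
  obtain ⟨T, rfl⟩ : ∃ T : Matrix (Fin d × Fin d) (Fin d × Fin d) ℂ, ρ = T * Tᴴ :=
    ⟨msqrt ρ, by rw [(posSemidef_msqrt hρ).isHermitian.eq, msqrt_mul_msqrt hρ]⟩
  have h := re_trace_le_fidelity_of_fromBlocks
    (posSemidef_fromBlocks_mul (leftFactor T) (rightFactor T))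
  rwa [leftFactor_mul_conjTranspose, conjTranspose_rightFactor_mul,
    trace_leftFactor_mul_rightFactor, ← trace_swap_mul] at h

theorem stmt10_general (d : ℕ) (ρA ρB : Matrix (Fin d) (Fin d) ℂ)
    (ρAB : Matrix ((Fin d) × (Fin d)) ((Fin d) × (Fin d)) ℂ)
    (hAB : IsCoupling ρAB ρA ρB) :
    ((Psym d * ρAB).trace).re ≤ (1 + fidelity ρA ρB) / 2 := by
  obtain ⟨⟨hρ, htr⟩, rfl, rfl⟩ := hAB
  have h := re_trace_swap_mul_le_fidelity hρ
  rw [trace_Psym_mul, htr]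
  simp only [Complex.div_ofNat_re, Complex.add_re, Complex.one_re]
  linarith

theorem stmt10 (d : ℕ) (ρA ρB : Matrix (Fin d) (Fin d) ℂ)
    (hA : IsDensity ρA) (hB : IsDensity ρB)
    (ρAB : Matrix ((Fin d) × (Fin d)) ((Fin d) × (Fin d)) ℂ)
    (hAB : IsCoupling ρAB ρA ρB) :
    ((Psym d * ρAB).trace).re ≤ (1 + fidelity ρA ρB) / 2 :=
  stmt10_general d ρA ρB ρAB hAB
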